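/- arXiv:1205.6128 — 2 statements merged into one kernel-verified Lean document; each statement's English description precedes it below -/
import Mathlib

section
/- For any composition p = (p_1,...,p_k) of n, the Hall scalar product ⟨C_{p_1} C_{p_2} ⋯ C_{p_k} 1, e_n⟩ equals 0 if some part p_i > 1, and equals 1 if all parts p_i = 1. -/
open MvPolynomial

noncomputable section

/-- The coefficient field `ℚ(q,t)`. -/
abbrev F : Type := FractionRing (MvPolynomial (Fin 2) ℚ)

def q : F := algebraMap (MvPolynomial (Fin 2) ℚ) F (X 0)
def t : F := algebraMap (MvPolynomial (Fin 2) ℚ) F (X 1)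

/-- The ring of symmetric functions over `ℚ(q,t)`, presented as the polynomial
ring in the power sums `p₁, p₂, …`; the variable `i` represents `p_{i+1}`. -/
abbrev SymF : Type := MvPolynomial ℕ F

/-- The power sum `p_k` (for `k ≥ 1`). -/
def pSym (k : ℕ) : SymF := X (k - 1)

/-- `p_μ = p_{μ₁} ⋯ p_{μ_k}`. -/
def pProd {n : ℕ} (μ : n.Partition) : SymF := (μ.parts.map pSym).prod

/-- `z_μ = ∏ μᵢ ⋅ ∏_k m_k!`. -/
def zstat {n : ℕ} (μ : n.Partition) : ℚ :=
  (μ.parts.prod : ℕ) * ∏ k ∈ μ.parts.toFinset, (Nat.factorial (μ.parts.count k))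

/-- The complete homogeneous symmetric function `h_n = Σ_{μ⊢n} p_μ / z_μ`. -/
def hSym (n : ℕ) : SymF := ∑ μ : n.Partition, ((zstat μ : F))⁻¹ • pProd μ

/-- The elementary symmetric function `e_n = Σ_{μ⊢n} (-1)^{n-ℓ(μ)} p_μ / z_μ`. -/
def eSym (n : ℕ) : SymF :=
  ∑ μ : n.Partition, ((-1 : F) ^ (n - Multiset.card μ.parts) * (zstat μ : F)⁻¹) • pProd μ

/-- `h_m` for an integer index, vanishing for negative `m`. -/
def hZ (m : ℤ) : SymF := if m < 0 then 0 else hSym m.toNat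

/-- The Schur function of a (weakly decreasing) list of parts, via the Jacobi–Trudi
determinant `s_λ = det(h_{λ_i - i + j})`. -/
def schurOf (l : List ℕ) : SymF :=
  Matrix.det (Matrix.of fun i j : Fin l.length => hZ ((l.get i : ℤ) - (i : ℤ) + (j : ℤ)))

/-- The Schur function of a partition. -/
def schur {n : ℕ} (μ : n.Partition) : SymF := schurOf (μ.parts.sort (· ≥ ·))

/-- `i`-th row length (0-indexed) of the partition `μ`. -/
def rowLen {n : ℕ} (μ : n.Partition) (i : ℕ) : ℕ := (μ.parts.sort (· ≥ ·)).getD i 0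

/-- `j`-th column length (0-indexed) of `μ`, i.e. the row lengths of the conjugate. -/
def colLen {n : ℕ} (μ : n.Partition) (j : ℕ) : ℕ :=
  ((Finset.range n).filter fun i => j < rowLen μ i).card

/-- The cells of the (French) Ferrers diagram of `μ`, as pairs
`(row, column) = (coleg, coarm)`, 0-indexed. -/
def cells {n : ℕ} (μ : n.Partition) : Finset (ℕ × ℕ) :=
  (Finset.range n ×ˢ Finset.range n).filter fun c => c.2 < rowLen μ c.1

def armLen {n : ℕ} (μ : n.Partition) (c : ℕ × ℕ) : ℕ := rowLen μ c.1 - c.2 - 1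
def legLen {n : ℕ} (μ : n.Partition) (c : ℕ × ℕ) : ℕ := colLen μ c.2 - c.1 - 1

/-- `B_μ(q^k, t^k) = Σ_{c∈μ} t^{k l'(c)} q^{k a'(c)}`. -/
def Bmu {n : ℕ} (μ : n.Partition) (k : ℕ) : F :=
  ∑ c ∈ cells μ, t ^ (k * c.1) * q ^ (k * c.2)

/-- `M` evaluated with `q,t` raised to the `k`-th power: `(1-t^k)(1-q^k)`. -/
def Mk (k : ℕ) : F := (1 - t ^ k) * (1 - q ^ k)

/-- `n(μ) = Σ_c l'(c)`. -/
def nstat {n : ℕ} (μ : n.Partition) : ℕ := ∑ c ∈ cells μ, c.1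
/-- `n(μ') = Σ_c a'(c)`. -/
def nstat' {n : ℕ} (μ : n.Partition) : ℕ := ∑ c ∈ cells μ, c.2

/-- `T_μ = t^{n(μ)} q^{n(μ')}`. -/
def Tstat {n : ℕ} (μ : n.Partition) : F := t ^ nstat μ * q ^ nstat' μ

/-- `Π_μ = ∏_{c∈μ, c≠(0,0)} (1 - t^{l'} q^{a'})`. -/
def PiStat {n : ℕ} (μ : n.Partition) : F :=
  ∏ c ∈ (cells μ).erase (0, 0), (1 - t ^ c.1 * q ^ c.2)

/-- `w_μ = ∏_{c∈μ} (q^a - t^{l+1})(t^l - q^{a+1})`. -/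
def wstat {n : ℕ} (μ : n.Partition) : F :=
  ∏ c ∈ cells μ, (q ^ armLen μ c - t ^ (legLen μ c + 1)) *
    (t ^ legLen μ c - q ^ (armLen μ c + 1))

/-- Plethysm `F[cX]`, rescaling each power sum: `p_k ↦ c(k)·p_k`. -/
def plethMul (c : ℕ → F) : SymF →ₐ[F] SymF :=
  aeval (fun i => c (i + 1) • (X i : SymF))

/-- Plethystic evaluation sending each `p_k` to `c k` in an `F`-algebra `A`. -/
def plethEval {A : Type*} [CommRing A] [Algebra F A] (c : ℕ → A) : SymF →ₐ[F] A :=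
  aeval (fun i => c (i + 1))

/-- The fundamental involution `ω : p_k ↦ (-1)^{k-1} p_k`. -/
def omegaSym : SymF →ₐ[F] SymF := plethMul (fun k => (-1 : F) ^ (k - 1))

/-- `z`-statistic of a power-sum monomial `d` (where `d i` is the exponent of `p_{i+1}`). -/
def zMon (d : ℕ →₀ ℕ) : F :=
  ∏ k ∈ d.support, ((k + 1 : ℕ) : F) ^ d k * (Nat.factorial (d k) : F)

/-- The Hall scalar product, `⟨p_λ, p_μ⟩ = z_μ δ_{λμ}`. -/
def hall (f g : SymF) : F := ∑ d ∈ f.support, coeff d f * coeff d g * zMon d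

/-- The star-deformation factor for a power-sum monomial. -/
def zMonStar (d : ℕ →₀ ℕ) : F :=
  (-1 : F) ^ (∑ k ∈ d.support, k * d k) *
    ∏ k ∈ d.support, ((1 - t ^ (k + 1)) * (1 - q ^ (k + 1))) ^ d k * zMon d

/-- The star scalar product
`⟨p_λ, p_μ⟩_* = (-1)^{|μ|-ℓ(μ)} ∏ (1-t^{μ_i})(1-q^{μ_i}) z_μ δ_{λμ}`. -/
def starP (f g : SymF) : F := ∑ d ∈ f.support, coeff d f * coeff d g * zMonStar d

/-- Dominance order: `ν ⊴ λ` (`λ` dominates `ν`). -/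
def Dominates {n : ℕ} (ν lam : n.Partition) : Prop :=
  ∀ i, ∑ j ∈ Finset.range i, rowLen ν j ≤ ∑ j ∈ Finset.range i, rowLen lam j

/-- `λ` dominates the conjugate of `μ`. -/
def DominatesConj {n : ℕ} (μ lam : n.Partition) : Prop :=
  ∀ i, ∑ j ∈ Finset.range i, colLen μ j ≤ ∑ j ∈ Finset.range i, rowLen lam j

open Classical in
/-- The defining axioms of the modified Macdonald basis `{H̃_μ}_{μ⊢n}`:
`H̃_μ[X(q-1)] ∈ span{s_λ : λ ⪰ μ}`, `H̃_μ[X(t-1)] ∈ span{s_λ : λ ⪰ μ'}`, and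
`⟨H̃_μ, s_{(n)}⟩ = 1`. -/
def MacAxioms (n : ℕ) (H : n.Partition → SymF) : Prop :=
  ∀ μ : n.Partition,
    (∃ c : n.Partition → F,
      plethMul (fun k => q ^ k - 1) (H μ) =
        ∑ lam : n.Partition, (if Dominates μ lam then c lam else 0) • schur lam) ∧
    (∃ c : n.Partition → F,
      plethMul (fun k => t ^ k - 1) (H μ) =
        ∑ lam : n.Partition, (if DominatesConj μ lam then c lam else 0) • schur lam) ∧
    hall (H μ) (hSym n) = 1

open Classical in
/-- The modified Macdonald polynomial `H̃_μ[X;q,t]`. -/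
def Htilde (n : ℕ) : n.Partition → SymF :=
  if h : ∃ H : n.Partition → SymF, MacAxioms n H then h.choose else fun _ => 0

/-- The Macdonald eigenoperator `Δ_G`, acting on the homogeneous component of
degree `n` (`Δ_G H̃_μ = G[B_μ] H̃_μ`, extended using the `H̃`-expansion computed
via the star scalar product). -/
def Delta (G : SymF) (n : ℕ) (P : SymF) : SymF :=
  ∑ μ : n.Partition,
    (starP P (Htilde n μ) / wstat μ) •
      ((plethEval (fun k => Bmu μ k) G : F) • Htilde n μ)

/-- Weighted (plethystic) degree of a symmetric function. -/
def wdeg (G : SymF) : ℕ := weightedTotalDegree (fun i => i + 1) G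

/-- `G[X - c·y] ∈ Λ[y]`, where `p_k[X - c·y] = p_k - c_k y^k`. -/
def subY (c : ℕ → F) : SymF →ₐ[F] Polynomial SymF :=
  aeval (fun i => Polynomial.C (X i : SymF) -
    (algebraMap F (Polynomial SymF) (c (i + 1))) * Polynomial.X ^ (i + 1))

/-- The operator `C_a`:
`C_a G = (-1/q)^{a-1} G[X - (1-1/q)/z] Σ_m z^m h_m[X] |_{z^a}`. -/
def Cop (a : ℕ) (G : SymF) : SymF :=
  (-q⁻¹) ^ (a - 1) •
    ∑ j ∈ Finset.range (wdeg G + 1),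
      Polynomial.coeff (subY (fun k => 1 - (q⁻¹) ^ k) G) j * hSym (a + j)

/-- The operator `B̃_a`: `B̃_a G = G[X - (1-q)/z] Ω[zX] |_{z^a}`. -/
def Btilde (a : ℕ) (G : SymF) : SymF :=
  ∑ j ∈ Finset.range (wdeg G + 1),
    Polynomial.coeff (subY (fun k => 1 - q ^ k) G) j * hSym (a + j)

/-- The operator `B_a = ω B̃_a ω`. -/
def Bop (a : ℕ) (G : SymF) : SymF := omegaSym (Btilde a (omegaSym G))

/-- `C_{p_1} C_{p_2} ⋯ C_{p_k} 1`. -/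
def CWord (p : List ℕ) : SymF := p.foldr Cop 1

/-- The star-adjoint `C*_a P = (-1/q)^{a-1} P[X - εM/z] Ω[-εzX/(q(1-t))]|_{z^{-a}}`. -/
def Cstar (a : ℕ) (P : SymF) : SymF :=
  (-q⁻¹) ^ (a - 1) •
    ∑ m ∈ Finset.range (wdeg P + 1),
      Polynomial.coeff (subY (fun k => (-1 : F) ^ k * Mk k) P) (a + m) *
        plethMul (fun k => (-1 : F) ^ (k - 1) * (q ^ k * (1 - t ^ k))⁻¹) (hSym m)

/-- The star-adjoint `B*_a P = P[X + M/z] Ω[-zX/(1-t)]|_{z^{-a}}`. -/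
def Bstar (a : ℕ) (P : SymF) : SymF :=
  ∑ m ∈ Finset.range (wdeg P + 1),
    Polynomial.coeff (subY (fun k => -Mk k) P) (a + m) *
      plethMul (fun k => -(1 - t ^ k)⁻¹) (hSym m)

/-!
The specialization `ePairing : p_k ↦ (-1)^(k-1) z^k` sends `f` to `Σ_n ⟨f, e_n⟩ z^n`, because
`⟨p_μ, e_n⟩ = (-1)^(n-ℓ(μ))`. It sends `h_m` to `S_m z^m` with `S_m = Σ_{μ⊢m} (-1)^(m-ℓ(μ)) / z_μ`,
and removing one part of size `k` from each `μ` gives `m S_m = Σ_k (-1)^(k-1) S_(m-k)`, so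
`S = 1, 1, 0, 0, …`. Hence in `C_a G = (-1/q)^(a-1) Σ_j G_j h_(a+j)`, where `G_j` is the
coefficient of `z^(-j)` in `G[X - (1-1/q)/z]`, only the term `a = 1, j = 0` survives
`ePairing`, and `G_0 = G`: `ePairing (C_a G)` is `z · ePairing G` for `a = 1` and `0` for `a > 1`.
-/


def zMultiset (s : Multiset ℕ) : ℕ := s.prod * ∏ k ∈ s.toFinset, (s.count k).factorial

lemma zMultiset_pos {s : Multiset ℕ} (hs : ∀ x ∈ s, 0 < x) : 0 < zMultiset s :=
  Nat.mul_pos (Multiset.prod_pos hs) (Finset.prod_pos fun k _ => (s.count k).factorial_pos)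

lemma prod_factorial_count_eq_of_subset {s : Multiset ℕ} {T : Finset ℕ} (hT : s.toFinset ⊆ T) :
    ∏ k ∈ s.toFinset, (s.count k).factorial = ∏ k ∈ T, (s.count k).factorial :=
  Finset.prod_subset hT fun k _ hk => by
    rw [Multiset.count_eq_zero.mpr (by simpa using hk), Nat.factorial_zero]

lemma zMultiset_cons (k : ℕ) (s : Multiset ℕ) :
    zMultiset (k ::ₘ s) = k * (s.count k + 1) * zMultiset s := by
  classical
  set T := insert k s.toFinset
  have hT : (k ::ₘ s).toFinset = T := by ext; simp [T]
  have hrest : ∀ j ∈ T.erase k, ((k ::ₘ s).count j).factorial = (s.count j).factorial :=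
    fun j hj => by rw [Multiset.count_cons_of_ne (Finset.ne_of_mem_erase hj)]
  rw [zMultiset, zMultiset, hT, prod_factorial_count_eq_of_subset (Finset.subset_insert k _),
    ← Finset.mul_prod_erase T _ (Finset.mem_insert_self k _),
    ← Finset.mul_prod_erase T (fun j => (s.count j).factorial) (Finset.mem_insert_self k _),
    Finset.prod_congr rfl hrest, Multiset.prod_cons, Multiset.count_cons_self,
    Nat.factorial_succ]
  ring

lemma zstat_eq_zMultiset {n : ℕ} (μ : n.Partition) : zstat μ = zMultiset μ.parts := by
  rw [zstat, zMultiset]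
  push_cast
  rfl

def signedZInvSum (m : ℕ) : ℚ :=
  ∑ μ : m.Partition, (-1) ^ (m - Multiset.card μ.parts) / zstat μ

lemma Multiset.card_le_sum_of_pos {s : Multiset ℕ} (hs : ∀ x ∈ s, 0 < x) :
    Multiset.card s ≤ s.sum := by
  simpa using Multiset.card_nsmul_le_sum (a := 1) hs

lemma Nat.Partition.card_parts_le {m : ℕ} (μ : m.Partition) : Multiset.card μ.parts ≤ m :=
  (Multiset.card_le_sum_of_pos fun _ hx => μ.parts_pos hx).trans_eq μ.parts_sum

lemma Nat.Partition.eq_sum_mul_count {m : ℕ} (μ : m.Partition) :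
    m = ∑ k ∈ Finset.Icc 1 m, k * μ.parts.count k := by
  have hsub : μ.parts.toFinset ⊆ Finset.Icc 1 m := fun k hk => by
    rw [Multiset.mem_toFinset] at hk
    exact Finset.mem_Icc.mpr ⟨μ.parts_pos hk, Nat.Partition.le_of_mem_parts hk⟩
  conv_lhs => rw [← μ.parts_sum, Finset.sum_multiset_count]
  simp_rw [smul_eq_mul, mul_comm]
  exact Finset.sum_subset hsub fun k _ hk => by
    rw [Multiset.count_eq_zero.mpr (by simpa using hk), mul_zero]

lemma sum_mul_count_signed_div_zstat {m k : ℕ} (hk : 1 ≤ k) (hkm : k ≤ m) :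
    ∑ μ : m.Partition, (k * μ.parts.count k : ℚ) * ((-1) ^ (m - Multiset.card μ.parts) / zstat μ)
      = (-1) ^ (k - 1) * signedZInvSum (m - k) := by
  set e := Nat.Partition.partitionWithPartEquiv hk hkm
  rw [← Finset.sum_filter_of_ne (p := fun μ : m.Partition => k ∈ μ.parts) fun μ _ h => by
    by_contra hμ; simp [Multiset.count_eq_zero.mpr hμ] at h]
  rw [Finset.sum_subtype _ (p := fun μ : m.Partition => k ∈ μ.parts) (by simp),
    ← e.symm.sum_comp, signedZInvSum, Finset.mul_sum]
  refine Fintype.sum_congr _ _ fun ν => ?_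
  have hparts : (e.symm ν).1.parts = k ::ₘ ν.parts :=
    Nat.Partition.partitionWithPartEquiv_symm_apply_parts hk hkm ν
  have hν := ν.card_parts_le
  have hsign : m - Multiset.card (k ::ₘ ν.parts) = (k - 1) + (m - k - Multiset.card ν.parts) := by
    rw [Multiset.card_cons]; omega
  have hz : (zMultiset ν.parts : ℚ) ≠ 0 := by
    exact_mod_cast (zMultiset_pos fun _ hx => ν.parts_pos hx).ne'
  rw [zstat_eq_zMultiset, zstat_eq_zMultiset, hparts, zMultiset_cons, Multiset.count_cons_self,
    hsign, pow_add]
  have hkc : (k : ℚ) * (ν.parts.count k + 1) ≠ 0 := by positivity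
  push_cast
  field_simp

lemma signedZInvSum_newton (m : ℕ) :
    m * signedZInvSum m = ∑ k ∈ Finset.Icc 1 m, (-1) ^ (k - 1) * signedZInvSum (m - k) := by
  calc (m : ℚ) * signedZInvSum m
      = ∑ μ : m.Partition, ∑ k ∈ Finset.Icc 1 m,
          (k * μ.parts.count k : ℚ) * ((-1) ^ (m - Multiset.card μ.parts) / zstat μ) := by
        rw [signedZInvSum, Finset.mul_sum]
        refine Fintype.sum_congr _ _ fun μ => ?_
        rw [← Finset.sum_mul]
        congr 1
        exact_mod_cast μ.eq_sum_mul_count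
    _ = _ := by
        rw [Finset.sum_comm]
        exact Finset.sum_congr rfl fun k hk =>
          sum_mul_count_signed_div_zstat (Finset.mem_Icc.mp hk).1 (Finset.mem_Icc.mp hk).2

lemma signedZInvSum_eq (m : ℕ) : signedZInvSum m = if m ≤ 1 then 1 else 0 := by
  induction m using Nat.strong_induction_on with
  | _ m ih =>
    match m with
    | 0 => simp [signedZInvSum, Nat.Partition.partition_zero_parts, zstat]
    | 1 => simpa [ih 0 one_pos] using signedZInvSum_newton 1
    | n + 2 =>
      have h := signedZInvSum_newton (n + 2)
      rw [Finset.sum_congr rfl fun k hk => by rw [ih _ (by grind)],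
        Finset.sum_Icc_succ_top (by omega), Finset.sum_Icc_succ_top (by omega),
        Finset.sum_eq_zero fun k hk => by grind] at h
      have hzero : ((n + 2 : ℕ) : ℚ) * signedZInvSum (n + 2) = 0 := by
        rw [h]
        simp [pow_succ]
      rw [if_neg (by omega)]
      exact (mul_eq_zero.mp hzero).resolve_left (by positivity)

def partsExponent (s : Multiset ℕ) : ℕ →₀ ℕ := Multiset.toFinsupp (s.map (· - 1))

lemma prod_map_X_eq_monomial {σ R : Type*} [CommSemiring R] [DecidableEq σ] (u : Multiset σ) :
    (u.map (X : σ → MvPolynomial σ R)).prod = monomial (Multiset.toFinsupp u) 1 := by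
  induction u using Multiset.induction_on with
  | empty => simp
  | cons a u ih =>
    rw [Multiset.map_cons, Multiset.prod_cons, ih, ← Multiset.singleton_add,
      Multiset.toFinsupp_add, Multiset.toFinsupp_singleton, X, monomial_mul, one_mul]

lemma prod_map_pSym (s : Multiset ℕ) : (s.map pSym).prod = monomial (partsExponent s) 1 := by
  rw [partsExponent, ← prod_map_X_eq_monomial, Multiset.map_map]
  rfl

lemma map_succ_map_pred {s : Multiset ℕ} (hs : ∀ x ∈ s, 0 < x) :
    (s.map (· - 1)).map (· + 1) = s := by
  rw [Multiset.map_map]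
  exact (Multiset.map_congr rfl fun x hx => Nat.sub_add_cancel (hs x hx)).trans s.map_id

lemma partsExponent_inj {s t : Multiset ℕ} (hs : ∀ x ∈ s, 0 < x) (ht : ∀ x ∈ t, 0 < x) :
    partsExponent s = partsExponent t ↔ s = t := by
  refine ⟨fun h => ?_, congrArg _⟩
  rw [← map_succ_map_pred hs, ← map_succ_map_pred ht]
  exact congrArg _ (Multiset.toFinsupp.injective h)

lemma partsExponent_map_succ (d : ℕ →₀ ℕ) :
    partsExponent (d.toMultiset.map (· + 1)) = d := by
  rw [partsExponent, Multiset.map_map]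
  simp

lemma zMon_partsExponent {s : Multiset ℕ} (hs : ∀ x ∈ s, 0 < x) :
    zMon (partsExponent s) = zMultiset s := by
  have hinj : Set.InjOn (· - 1) (s.toFinset : Set ℕ) := fun a ha b hb hab => by
    have := hs a (by simpa using ha); have := hs b (by simpa using hb)
    simp only at hab; omega
  have hcount : ∀ k ∈ s.toFinset, (s.map (· - 1)).count (k - 1) = s.count k := fun k hk => by
    rw [← Multiset.count_map_eq_count' (· + 1) _ (add_left_injective 1), map_succ_map_pred hs,
      Nat.sub_add_cancel (hs k (by simpa using hk))]
  rw [zMon, partsExponent, Multiset.toFinsupp_support, Multiset.toFinset_map,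
    Finset.prod_image hinj, zMultiset, Finset.prod_multiset_count s]
  push_cast
  rw [← Finset.prod_mul_distrib]
  refine Finset.prod_congr rfl fun k hk => ?_
  rw [Multiset.toFinsupp_apply, hcount k hk, ← Nat.cast_add_one,
    Nat.sub_add_cancel (hs k (by simpa using hk))]

lemma hall_sum_right {ι : Type*} (f : SymF) (s : Finset ι) (g : ι → SymF) :
    hall f (∑ i ∈ s, g i) = ∑ i ∈ s, hall f (g i) := by
  simp only [hall, coeff_sum, Finset.mul_sum, Finset.sum_mul]
  exact Finset.sum_comm

lemma hall_smul_right (f : SymF) (c : F) (g : SymF) : hall f (c • g) = c * hall f g := by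
  simp only [hall, coeff_smul, smul_eq_mul, Finset.mul_sum]
  exact Finset.sum_congr rfl fun _ _ => by ring

lemma hall_monomial_right (f : SymF) (d : ℕ →₀ ℕ) (c : F) :
    hall f (monomial d c) = coeff d f * c * zMon d := by
  simp only [hall, coeff_monomial, mul_ite, ite_mul, mul_zero, zero_mul]
  rw [Finset.sum_ite_eq]
  split_ifs with hd
  · rfl
  · rw [notMem_support_iff.mp hd, zero_mul, zero_mul]

lemma zstat_cast_eq {n : ℕ} (μ : n.Partition) : ((zstat μ : ℚ) : F) = zMultiset μ.parts := by
  rw [zstat_eq_zMultiset, Rat.cast_natCast]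

lemma zstat_cast_ne_zero {n : ℕ} (μ : n.Partition) : ((zstat μ : ℚ) : F) ≠ 0 := by
  rw [zstat_cast_eq]
  exact_mod_cast (zMultiset_pos fun _ hx => μ.parts_pos hx).ne'

lemma hall_eSym (f : SymF) (n : ℕ) :
    hall f (eSym n) = ∑ μ : n.Partition,
      (-1) ^ (n - Multiset.card μ.parts) * coeff (partsExponent μ.parts) f := by
  rw [eSym, hall_sum_right]
  refine Fintype.sum_congr _ _ fun μ => ?_
  have hz := zstat_cast_ne_zero μ
  rw [hall_smul_right, pProd, prod_map_pSym, hall_monomial_right,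
    zMon_partsExponent fun _ hx => μ.parts_pos hx, ← zstat_cast_eq]
  field_simp

def ePairing : SymF →ₐ[F] Polynomial F :=
  aeval fun i => Polynomial.C ((-1) ^ i) * Polynomial.X ^ (i + 1)

lemma ePairing_X (i : ℕ) :
    ePairing (X i) = Polynomial.C ((-1) ^ i) * Polynomial.X ^ (i + 1) :=
  aeval_X _ _

lemma ePairing_prod_map_pSym {s : Multiset ℕ} (hs : ∀ x ∈ s, 0 < x) :
    ePairing (s.map pSym).prod
      = Polynomial.C ((-1) ^ (s.sum - Multiset.card s)) * Polynomial.X ^ s.sum := by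
  induction s using Multiset.induction_on with
  | empty => simp
  | cons a s ih =>
    have ha := hs a (Multiset.mem_cons_self a s)
    have hs' : ∀ x ∈ s, 0 < x := fun x hx => hs x (Multiset.mem_cons_of_mem hx)
    have hcard := Multiset.card_le_sum_of_pos hs'
    have hsign : a + s.sum - (Multiset.card s + 1) = (a - 1) + (s.sum - Multiset.card s) := by
      omega
    rw [Multiset.map_cons, Multiset.prod_cons, map_mul, ih hs', pSym, ePairing_X,
      Multiset.sum_cons, Multiset.card_cons, hsign, Nat.sub_add_cancel ha, pow_add, pow_add,
      Polynomial.C_mul]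
    ring

lemma ePairing_pProd {n : ℕ} (μ : n.Partition) :
    ePairing (pProd μ) = Polynomial.C ((-1) ^ (n - Multiset.card μ.parts)) * Polynomial.X ^ n := by
  rw [pProd, ePairing_prod_map_pSym fun _ hx => μ.parts_pos hx, μ.parts_sum]

lemma ePairing_hSym (m : ℕ) : ePairing (hSym m) = if m ≤ 1 then Polynomial.X ^ m else 0 := by
  have h : ePairing (hSym m) = Polynomial.C ((signedZInvSum m : ℚ) : F) * Polynomial.X ^ m := by
    simp only [hSym, map_sum, map_smul, ePairing_pProd, signedZInvSum, Rat.cast_sum,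
      Finset.sum_mul]
    refine Fintype.sum_congr _ _ fun μ => ?_
    rw [Polynomial.smul_eq_C_mul, ← mul_assoc, ← Polynomial.C_mul]
    push_cast
    rw [inv_mul_eq_div]
  rw [h, signedZInvSum_eq]
  split_ifs <;> simp

lemma monomial_eq_smul_prod_map_pSym (d : ℕ →₀ ℕ) (c : F) :
    monomial d c = c • ((d.toMultiset.map (· + 1)).map pSym).prod := by
  rw [prod_map_pSym, partsExponent_map_succ, smul_monomial, smul_eq_mul, mul_one]

lemma coeff_ePairing (f : SymF) (n : ℕ) :
    (ePairing f).coeff n = ∑ μ : n.Partition,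
      (-1) ^ (n - Multiset.card μ.parts) * coeff (partsExponent μ.parts) f := by
  induction f using MvPolynomial.induction_on' with
  | add f g hf hg =>
    simp only [map_add, Polynomial.coeff_add, coeff_add, mul_add, Finset.sum_add_distrib, hf, hg]
  | monomial d c =>
    set s := d.toMultiset.map (· + 1)
    have hs : ∀ x ∈ s, 0 < x := by simp [s]
    have hexp : ∀ μ : n.Partition, partsExponent μ.parts = d ↔ μ.parts = s := fun μ => by
      rw [← partsExponent_map_succ d, partsExponent_inj (fun _ hx => μ.parts_pos hx) hs]
    simp only [coeff_monomial, eq_comm (a := d), hexp, mul_ite, mul_zero]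
    rw [monomial_eq_smul_prod_map_pSym, map_smul, ePairing_prod_map_pSym hs,
      Polynomial.coeff_smul, Polynomial.coeff_C_mul_X_pow, smul_eq_mul]
    by_cases hn : n = s.sum
    · subst hn
      rw [Finset.sum_eq_single ⟨s, fun hx => hs _ hx, rfl⟩ (fun μ _ hμ => if_neg fun h =>
        hμ (Nat.Partition.ext h)) (by simp), if_pos rfl, if_pos rfl, mul_comm]
    · rw [if_neg hn, mul_zero]
      refine (Finset.sum_eq_zero fun μ _ => if_neg fun h => hn ?_).symm
      rw [← h, μ.parts_sum]

lemma hall_eSym_eq_coeff_ePairing (f : SymF) (n : ℕ) :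
    hall f (eSym n) = (ePairing f).coeff n := by
  rw [hall_eSym, coeff_ePairing]

lemma coeff_zero_subY (c : ℕ → F) (G : SymF) : (subY c G).coeff 0 = G := by
  suffices h : ((Polynomial.aeval (0 : SymF)).restrictScalars F).comp (subY c) = AlgHom.id F SymF by
    simpa [Polynomial.coeff_zero_eq_aeval_zero] using DFunLike.congr_fun h G
  refine MvPolynomial.algHom_ext fun i => ?_
  simp [subY]

lemma ePairing_Cop {a : ℕ} (ha : 0 < a) (G : SymF) :
    ePairing (Cop a G) = if a = 1 then Polynomial.X * ePairing G else 0 := by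
  have hterm : ∀ j, ePairing ((subY (fun k => 1 - q⁻¹ ^ k) G).coeff j * hSym (a + j))
      = if a = 1 ∧ j = 0 then Polynomial.X * ePairing G else 0 := fun j => by
    rw [map_mul, ePairing_hSym]
    by_cases h : a = 1 ∧ j = 0
    · rw [if_pos (by omega), if_pos h, h.1, h.2, coeff_zero_subY, mul_comm, add_zero, pow_one]
    · rw [if_neg (by omega), if_neg h, mul_zero]
  simp only [Cop, map_smul, map_sum, hterm]
  split_ifs with h1
  · subst h1
    simp
  · simp [h1]

lemma ePairing_CWord {p : List ℕ} (hp : ∀ x ∈ p, 0 < x) :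
    ePairing (CWord p) = if ∀ x ∈ p, x = 1 then Polynomial.X ^ p.sum else 0 := by
  induction p with
  | nil => simp [CWord]
  | cons a p ih =>
    have hCW : CWord (a :: p) = Cop a (CWord p) := rfl
    rw [hCW, ePairing_Cop (hp a List.mem_cons_self),
      ih fun x hx => hp x (List.mem_cons_of_mem a hx)]
    by_cases ha : a = 1
    · subst ha
      simp [pow_add, mul_comm]
    · simp [ha]

open Classical in
/-- for a composition `p = (p₁,…,p_k)` of `n`,
`⟨C_{p₁} C_{p₂} ⋯ C_{p_k} 1, e_n⟩` equals `0` if some part `pᵢ > 1` and `1` if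
all parts equal `1`. -/
theorem CWord_en_pairing (p : List ℕ) (hp : ∀ x ∈ p, 0 < x) :
    hall (CWord p) (eSym p.sum) = (if ∀ x ∈ p, x = 1 then 1 else 0) := by
  rw [hall_eSym_eq_coeff_ePairing, ePairing_CWord hp]
  split_ifs <;> simp

end
end

section
/- Let PF be a parking function in PF(J,n) (diagonal word a shuffle of 12⋯J and (J+1)⋯(J+n), with car J+n in cell (1,1)), with two-line array (V;U). If i_1 < i_2 < ⋯ < i_k are the positions where v_i > J (the big cars), then the vector (u_{i_1}, u_{i_2}, ..., u_{i_k}) satisfies u_{i_1} = 0 and u_{i_s} ≤ u_{i_{s-1}} + 1 for all 2 ≤ s ≤ k; hence it is the area sequence of a Dyck path. -/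
/-- A parking function on the `N × N` lattice square, encoded by its two-line
array: cars `v` (a bijection onto `{1,…,N}`) and area numbers `u`. -/
structure ParkingFunction (N : ℕ) where
  u : Fin N → ℕ
  v : Fin N → ℕ
  u_first : ∀ h : 0 < N, u ⟨0, h⟩ = 0
  u_step : ∀ i : Fin N, ∀ h : (i : ℕ) + 1 < N, u ⟨(i : ℕ) + 1, h⟩ ≤ u i + 1
  v_incr : ∀ i : Fin N, ∀ h : (i : ℕ) + 1 < N,
    u ⟨(i : ℕ) + 1, h⟩ = u i + 1 → v i < v ⟨(i : ℕ) + 1, h⟩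
  v_mem : ∀ i, v i ∈ Finset.Icc 1 N
  v_inj : Function.Injective v

/-- The diagonal word of a parking function: read cars by diagonals, from the
highest diagonal down to the main diagonal, from right to left within each
diagonal. -/
def ParkingFunction.diagWord {N : ℕ} (PF : ParkingFunction N) : List ℕ :=
  ((List.range N).reverse).flatMap fun d =>
    (((List.finRange N).filter fun i => PF.u i = d).reverse).map PF.v

/-- `IsShuffle w₁ w₂ w` means `w` is a shuffle (interleaving) of `w₁` and `w₂`. -/
inductive IsShuffle : List ℕ → List ℕ → List ℕ → Prop
  | nil : IsShuffle [] [] []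
  | left {a b c x} : IsShuffle a b c → IsShuffle (x :: a) b (x :: c)
  | right {a b c x} : IsShuffle a b c → IsShuffle a (x :: b) (x :: c)

/-!
Since the diagonal word reads the small cars in increasing order, a small car on a higher
diagonal is smaller than one on a lower diagonal. A rise `u (i+1) = u i + 1` of the area
sequence forces `v i < v (i+1)`, so no rise ends at a small car. Hence between two consecutive
big cars the area can only grow at the last step, by at most one; and the first car is big, so
the subsequence starts with `u 0 = 0`.
-/

theorem IsShuffle.filter_eq_left {a b c : List ℕ} {p : ℕ → Bool} (h : IsShuffle a b c)
    (ha : ∀ x ∈ a, p x) (hb : ∀ x ∈ b, ¬ p x) : c.filter p = a := by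
  induction h with
  | nil => rfl
  | left _ ih =>
    rw [List.filter_cons_of_pos (ha _ List.mem_cons_self),
      ih (fun y hy => ha y (List.mem_cons_of_mem _ hy)) hb]
  | right _ ih =>
    rw [List.filter_cons_of_neg (hb _ List.mem_cons_self)]
    exact ih ha fun y hy => hb y (List.mem_cons_of_mem _ hy)

namespace List

theorem isChain_finRange {N : ℕ} {R : Fin N → Fin N → Prop}
    (h : ∀ (i : Fin N) (h : (i : ℕ) + 1 < N), R i ⟨i + 1, h⟩) : (finRange N).IsChain R :=
  isChain_iff_getElem.mpr fun i hi => by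
    simp only [getElem_finRange, Fin.cast_mk]
    exact h ⟨i, by simp at hi; omega⟩ (by simpa using hi)

theorem isChain_map_cons_filter {α : Type*} (f : α → ℕ) (p : α → Bool) :
    ∀ (a : α) (l : List α),
      (a :: l).IsChain (fun x y => f y ≤ f x + 1 ∧ (p y = false → f y ≤ f x)) →
      ((a :: l.filter p).map f).IsChain fun x y => y ≤ x + 1
  | a, [], _ => isChain_singleton _
  | a, b :: l, h => by
    rw [isChain_cons_cons] at h
    have ih := isChain_map_cons_filter f p b l h.2
    rw [map_cons] at ih
    by_cases hb : p b
    · rw [filter_cons_of_pos hb, map_cons, map_cons, isChain_cons_cons]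
      exact ⟨h.1.1, ih⟩
    · have hfb : f b ≤ f a := h.1.2 (by simpa using hb)
      rw [filter_cons_of_neg hb, map_cons]
      rw [isChain_cons] at ih ⊢
      exact ⟨fun y hy => (ih.1 y hy).trans (by omega), ih.2⟩

end List

namespace ParkingFunction

variable {N : ℕ} (PF : ParkingFunction N)

theorem u_le_val (i : Fin N) : PF.u i ≤ i := by
  obtain ⟨t, ht⟩ := i
  induction t with
  | zero => simp [PF.u_first]
  | succ t ih =>
    have hstep : PF.u ⟨t + 1, ht⟩ ≤ PF.u ⟨t, by omega⟩ + 1 := PF.u_step ⟨t, by omega⟩ ht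
    have := ih (by omega)
    simp only at this ⊢
    omega

/-- The diagonal word lists the cars of higher diagonals first. -/
theorem rel_of_pairwise_diagWord {S : ℕ → ℕ → Prop} (h : PF.diagWord.Pairwise S)
    {p q : Fin N} (hpq : PF.u p < PF.u q) : S (PF.v q) (PF.v p) := by
  have hq : PF.u q < N := (PF.u_le_val q).trans_lt q.isLt
  rw [diagWord, List.pairwise_flatMap, List.pairwise_reverse, List.pairwise_iff_getElem] at h
  have := h.2 (PF.u p) (PF.u q) (by simpa using hpq.trans hq) (by simpa) hpq
  simp only [List.getElem_range] at this
  have hmem (r : Fin N) : PF.v r ∈ ((List.finRange N).filter fun i => PF.u i = PF.u r).reverse.map PF.v :=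
    List.mem_map_of_mem (List.mem_reverse.mpr (List.mem_filter.mpr ⟨List.mem_finRange r, by simp⟩))
  exact this _ (hmem q) _ (hmem p)

variable {PF} {J n : ℕ}
  (hshuffle : IsShuffle (List.range' 1 J) (List.range' (J + 1) n) PF.diagWord)
include hshuffle

theorem small_cars_antitone_of_shuffle {p q : Fin N} (hp : PF.v p ≤ J) (hq : PF.v q ≤ J)
    (hpq : PF.u p < PF.u q) : PF.v q < PF.v p := by
  have hsmall : PF.diagWord.filter (· ≤ J) = List.range' 1 J :=
    hshuffle.filter_eq_left (fun x hx => by simp [List.mem_range'_1] at hx ⊢; omega)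
      (fun x hx => by simp [List.mem_range'_1] at hx ⊢; omega)
  have hpw : (PF.diagWord.filter (· ≤ J)).Pairwise (· < ·) := by
    rw [hsmall]
    exact List.pairwise_lt_range'
  exact PF.rel_of_pairwise_diagWord (List.pairwise_filter.mp hpw) hpq (by simpa using hq)
    (by simpa using hp)

/-- A rise onto a small car needs a smaller car just before it, on a lower diagonal: impossible
for a big car, and against the order of the diagonal word for a small one. -/
theorem u_succ_le_of_small (i : Fin N) (h : (i : ℕ) + 1 < N) (hsmall : PF.v ⟨i + 1, h⟩ ≤ J) :
    PF.u ⟨i + 1, h⟩ ≤ PF.u i := by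
  by_contra hlt
  have hrise : PF.u ⟨i + 1, h⟩ = PF.u i + 1 := by have := PF.u_step i h; omega
  have hincr := PF.v_incr i h hrise
  have := small_cars_antitone_of_shuffle hshuffle (p := i) (by omega) hsmall (by omega)
  omega

end ParkingFunction

/-- let `PF ∈ 𝒫ℱ(J,n)`: a parking function on the
`(J+n) × (J+n)` square whose diagonal word is a shuffle of `1⋯J` and
`(J+1)⋯(J+n)` and whose first car (the one in cell `(1,1)`) is `J+n`.  Then the
subsequence of area numbers at the positions of the big cars (`> J`) starts with
`0` and increases by at most `1` at each step; hence it is the area sequence of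
a Dyck path, the Dyck path supporting the big cars of `PF`. -/
theorem big_car_area_sequence (J n : ℕ) (hn : 0 < n)
    (PF : ParkingFunction (J + n))
    (hshuffle : IsShuffle (List.range' 1 J) (List.range' (J + 1) n) PF.diagWord)
    (hfirst : PF.v ⟨0, by omega⟩ = J + n) :
    ∀ ub : List ℕ,
      ub = (((List.finRange (J + n)).filter fun i => J < PF.v i).map PF.u) →
      (∀ h : 0 < ub.length, ub.get ⟨0, h⟩ = 0) ∧
        (∀ s : ℕ, ∀ h : s + 1 < ub.length,
          ub.get ⟨s + 1, h⟩ ≤ ub.get ⟨s, Nat.lt_of_succ_lt h⟩ + 1) := by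
  intro ub hub
  have hchain : (List.finRange (J + n)).IsChain fun i j =>
      PF.u j ≤ PF.u i + 1 ∧ (decide (J < PF.v j) = false → PF.u j ≤ PF.u i) :=
    List.isChain_finRange fun i h =>
      ⟨PF.u_step i h, fun hsmall => PF.u_succ_le_of_small hshuffle i h (by simpa using hsmall)⟩
  obtain ⟨m, rfl⟩ : ∃ m, n = m + 1 := ⟨n - 1, by omega⟩
  have hfinRange : List.finRange (J + (m + 1)) = 0 :: (List.finRange (J + m)).map Fin.succ :=
    List.finRange_succ
  rw [hfinRange] at hchain hub
  rw [List.filter_cons_of_pos (by simp [show PF.v 0 = J + (m + 1) from hfirst])] at hub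
  subst hub
  exact ⟨fun _ => PF.u_first _,
    fun s h => (List.isChain_map_cons_filter _ _ _ _ hchain).getElem s h⟩
end
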